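/- Let G be a profinite group satisfying exactness of the sequence H¹(ker χ) → H¹(G) → H²(G) → H²(ker χ) at H²(G) for every χ ∈ H¹(G, ℤ/p). Then the following are equivalent: (1) for all χ₁, χ₂, χ₃ ∈ H¹(G) the triple Massey product ⟨χ₁,χ₂,χ₃⟩ is not essential; (2) for all χ₁, χ₂, χ₃ ∈ H¹(G) such that the pairs (χ₁,χ₃) and (χ₂,χ₃) are each ℤ/p-linearly independent, ⟨χ₁,χ₂,χ₃⟩ is not essential. -/

import Mathlib

/-!  Framework: mod-p group cohomology in low degrees via explicit
inhomogeneous cochains, cup products, restriction, corestriction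
(transfer), and triple Massey products. -/

namespace MasseyGalois

variable {p : ℕ}

/-- A (degree-one) character: an additive character `G → ℤ/p`,
i.e. a 1-cocycle; these are exactly the elements of `H¹(G, ℤ/p)`. -/
def IsChar (p : ℕ) {G : Type} [Group G] (χ : G → ZMod p) : Prop :=
  ∀ σ τ : G, χ (σ * τ) = χ σ + χ τ

theorem IsChar.one {G : Type} [Group G] {χ : G → ZMod p} (h : IsChar p χ) :
    χ 1 = 0 := by
  have h1 := h 1 1
  rw [mul_one] at h1
  exact (left_eq_add.mp h1)

theorem IsChar.inv {G : Type} [Group G] {χ : G → ZMod p} (h : IsChar p χ)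
    (σ : G) : χ σ⁻¹ = -χ σ := by
  have h1 := h σ σ⁻¹
  rw [mul_inv_cancel, h.one] at h1
  linear_combination -h1

/-- The kernel of a character, as a subgroup. -/
def charKer {G : Type} [Group G] (χ : G → ZMod p) (h : IsChar p χ) :
    Subgroup G where
  carrier := {σ | χ σ = 0}
  one_mem' := h.one
  mul_mem' := by
    intro a b ha hb
    simp only [Set.mem_setOf_eq] at *
    rw [h a b, ha, hb, add_zero]
  inv_mem' := by
    intro a ha
    simp only [Set.mem_setOf_eq] at *
    rw [h.inv, ha, neg_zero]

theorem mem_charKer_iff {G : Type} [Group G] {χ : G → ZMod p}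
    (h : IsChar p χ) {σ : G} : σ ∈ charKer χ h ↔ χ σ = 0 := Iff.rfl

theorem charKer_normal {G : Type} [Group G] (χ : G → ZMod p)
    (h : IsChar p χ) : (charKer χ h).Normal := by
  constructor
  intro n hn g
  show χ (g * n * g⁻¹) = 0
  rw [h, h, h.inv]
  have hn' : χ n = 0 := hn
  rw [hn']
  ring

theorem charKer_comm_mem {G : Type} [Group G] {χ : G → ZMod p}
    (h : IsChar p χ) (σ τ : G) : σ * τ * σ⁻¹ * τ⁻¹ ∈ charKer χ h := by
  show χ (σ * τ * σ⁻¹ * τ⁻¹) = 0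
  rw [h, h, h, h.inv, h.inv]
  ring

/-- Coboundary of a 1-cochain (inhomogeneous cochains, trivial action). -/
def d1 {G : Type} [Group G] (φ : G → ZMod p) : G → G → ZMod p :=
  fun σ τ => φ σ + φ τ - φ (σ * τ)

/-- Coboundary of a 2-cochain. -/
def d2 {G : Type} [Group G] (f : G → G → ZMod p) : G → G → G → ZMod p :=
  fun σ τ ρ => f τ ρ - f (σ * τ) ρ + f σ (τ * ρ) - f σ τ

/-- Cup product of two 1-cochains. -/
def cup {G : Type} (χ χ' : G → ZMod p) : G → G → ZMod p :=
  fun σ τ => χ σ * χ' τ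

def IsCocycle2 {G : Type} [Group G] (f : G → G → ZMod p) : Prop :=
  ∀ σ τ ρ, d2 f σ τ ρ = 0

def IsCoboundary2 {G : Type} [Group G] (f : G → G → ZMod p) : Prop :=
  ∃ φ : G → ZMod p, f = d1 φ

/-- Two 2-cochains represent the same class in `H²`. -/
def Cohomologous {G : Type} [Group G] (f g : G → G → ZMod p) : Prop :=
  IsCoboundary2 (f - g)

/-- `z` is the value `χ₁ ∪ φ₂₃ + φ₁₂ ∪ χ₃` of a defining system for the
triple Massey product `⟨χ₁, χ₂, χ₃⟩`. -/
def MasseyRep {G : Type} [Group G] (χ₁ χ₂ χ₃ : G → ZMod p)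
    (z : G → G → ZMod p) : Prop :=
  ∃ φ₁₂ φ₂₃ : G → ZMod p,
    d1 φ₁₂ = cup χ₁ χ₂ ∧ d1 φ₂₃ = cup χ₂ χ₃ ∧
    z = cup χ₁ φ₂₃ + cup φ₁₂ χ₃

/-- The set of all 2-cocycles whose class lies in the triple Massey
product `⟨χ₁, χ₂, χ₃⟩ ⊆ H²`; as this set is closed under coboundaries,
equalities/membership statements about it faithfully encode the
corresponding statements about the subset of `H²`. -/
def MasseySet {G : Type} [Group G] (χ₁ χ₂ χ₃ : G → ZMod p) :
    Set (G → G → ZMod p) :=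
  {z | ∃ z', MasseyRep χ₁ χ₂ χ₃ z' ∧ Cohomologous z z'}

/-- The Massey product is essential: non-empty but not containing `0`. -/
def MasseyEssential {G : Type} [Group G] (χ₁ χ₂ χ₃ : G → ZMod p) : Prop :=
  (MasseySet χ₁ χ₂ χ₃).Nonempty ∧
    (0 : G → G → ZMod p) ∉ MasseySet χ₁ χ₂ χ₃

/-- `ℤ/p`-linear independence of a pair of characters. -/
def LinIndepPair {G : Type} (χ χ' : G → ZMod p) : Prop :=
  ∀ a b : ZMod p, (∀ g : G, a * χ g + b * χ' g = 0) → a = 0 ∧ b = 0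

/-- Restriction of a 1-cochain to a subgroup. -/
def res1 {G : Type} [Group G] (U : Subgroup G) (χ : G → ZMod p) :
    ↥U → ZMod p := fun u => χ ↑u

/-- Restriction of a 2-cochain to a subgroup. -/
def res2 {G : Type} [Group G] (U : Subgroup G) (f : G → G → ZMod p) :
    ↥U → ↥U → ZMod p := fun u v => f ↑u ↑v

/-- Corestriction (transfer) on `H¹` from a finite-index subgroup. -/
noncomputable def cor1 {G : Type} [Group G] (K : Subgroup G)
    (φ : ↥K → ZMod p) : G → ZMod p := by
  classical
  exact if h : K.FiniteIndex ∧ IsChar p φ then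
    haveI := h.1
    let φ' : ↥K →* Multiplicative (ZMod p) :=
      { toFun := fun k => Multiplicative.ofAdd (φ k)
        map_one' := by
          show Multiplicative.ofAdd (φ 1) = 1
          rw [h.2.one]; rfl
        map_mul' := fun a b => by
          show Multiplicative.ofAdd (φ (a * b)) = _
          rw [h.2 a b]; rfl }
    fun g => Multiplicative.toAdd (MonoidHom.transfer φ' g)
  else 0

/-- Exactness of `H¹(ker χ) →(Cor) H¹(H) →(χ ∪ ·) H²(H)` at `H¹(H)`. -/
def ExactAtH1 {H : Type} [Group H] (p : ℕ) (χ : H → ZMod p)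
    (hχ : IsChar p χ) : Prop :=
  ∀ lam : H → ZMod p, IsChar p lam →
    (IsCoboundary2 (cup χ lam) ↔
      ∃ μ : ↥(charKer χ hχ) → ZMod p, IsChar p μ ∧
        lam = cor1 (charKer χ hχ) μ)

/-- Exactness of `H¹(H) →(χ ∪ ·) H²(H) →(Res) H²(ker χ)` at `H²(H)`. -/
def ExactAtH2 {H : Type} [Group H] (p : ℕ) (χ : H → ZMod p)
    (hχ : IsChar p χ) : Prop :=
  ∀ f : H → H → ZMod p, IsCocycle2 f →
    (IsCoboundary2 (res2 (charKer χ hχ) f) ↔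
      ∃ lam : H → ZMod p, IsChar p lam ∧ Cohomologous f (cup χ lam))

end MasseyGalois

/-!
If `(χ₁, χ₃)` is linearly dependent, then `χ₁ = 0`, where `0` is visibly a value of
`⟨χ₁, χ₂, χ₃⟩`, or `χ₃ = e • χ₁`. In the latter case every value `χ₁ ∪ φ₂₃ + φ₁₂ ∪ e χ₁` of the
Massey product restricts to zero on `ker χ₁`, so by exactness it is cohomologous to some
`χ₁ ∪ λ`; replacing `φ₂₃` by `φ₂₃ - λ` produces the value `0`. If `(χ₁, χ₃)` is independent but
`(χ₂, χ₃)` is not, then `χ₂ = 0` (trivial again) or `χ₃ = e • χ₂` with `e ≠ 0`. Then the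
inversion `g ↦ g⁻¹`, which carries `⟨χ₁, χ₂, χ₃⟩` onto `⟨χ₃, χ₂, χ₁⟩` and fixes `0`, moves us to
a triple in which both pairs are independent.
-/

namespace MasseyGalois

variable {p : ℕ} {G : Type}

section LinearAlgebra

theorem linIndepPair_iff_linearIndependent {χ χ' : G → ZMod p} :
    LinIndepPair χ χ' ↔ LinearIndependent (ZMod p) ![χ, χ'] := by
  simp only [LinearIndependent.pair_iff, LinIndepPair, funext_iff, Pi.add_apply, Pi.smul_apply,
    smul_eq_mul, Pi.zero_apply]

theorem LinIndepPair.symm {χ χ' : G → ZMod p} (h : LinIndepPair χ χ') : LinIndepPair χ' χ := by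
  rw [linIndepPair_iff_linearIndependent] at h ⊢
  exact LinearIndependent.pair_symm_iff.mp h

variable [Fact p.Prime]

theorem LinIndepPair.of_smul_left {χ χ' : G → ZMod p} {e : ZMod p}
    (h : LinIndepPair (e • χ) χ') : LinIndepPair χ χ' := by
  rw [linIndepPair_iff_linearIndependent] at h ⊢
  have he : e ≠ 0 := by
    rintro rfl
    exact h.ne_zero 0 (zero_smul _ χ)
  rwa [← LinearIndependent.pair_smul_smul_iff he.isUnit isUnit_one, one_smul]

theorem eq_zero_or_exists_eq_smul_of_not_linIndepPair {χ χ' : G → ZMod p}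
    (h : ¬ LinIndepPair χ χ') : χ = 0 ∨ ∃ e : ZMod p, χ' = e • χ := by
  rw [linIndepPair_iff_linearIndependent] at h
  by_cases hχ : χ = 0
  · exact Or.inl hχ
  · refine Or.inr (by_contra fun hne => h ?_)
    exact (LinearIndependent.pair_iff' hχ).mpr fun e he => hne ⟨e, he.symm⟩

end LinearAlgebra

@[simp]
theorem cup_zero_left (χ : G → ZMod p) : cup (0 : G → ZMod p) χ = 0 := by
  funext σ τ
  simp [cup]

@[simp]
theorem cup_zero_right (χ : G → ZMod p) : cup χ (0 : G → ZMod p) = 0 := by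
  funext σ τ
  simp [cup]

variable [Group G]

theorem IsChar.smul {χ : G → ZMod p} (h : IsChar p χ) (e : ZMod p) : IsChar p (e • χ) := by
  intro σ τ
  simp only [Pi.smul_apply, smul_eq_mul, h σ τ, mul_add]

@[simp]
theorem d1_zero : d1 (0 : G → ZMod p) = 0 := by
  funext σ τ
  simp [d1]

theorem Cohomologous.refl (f : G → G → ZMod p) : Cohomologous f f :=
  ⟨0, by rw [sub_self, d1_zero]⟩

theorem MasseyRep.mem_masseySet {χ₁ χ₂ χ₃ : G → ZMod p} {z : G → G → ZMod p}
    (h : MasseyRep χ₁ χ₂ χ₃ z) : z ∈ MasseySet χ₁ χ₂ χ₃ :=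
  ⟨z, h, Cohomologous.refl z⟩

theorem MasseyRep.isCocycle2 {χ₁ χ₂ χ₃ : G → ZMod p} {z : G → G → ZMod p}
    (h₁ : IsChar p χ₁) (h₃ : IsChar p χ₃) (h : MasseyRep χ₁ χ₂ χ₃ z) : IsCocycle2 z := by
  obtain ⟨φ₁₂, φ₂₃, h₁₂, h₂₃, rfl⟩ := h
  intro σ τ ρ
  have e₁₂ := congrFun (congrFun h₁₂ σ) τ
  have e₂₃ := congrFun (congrFun h₂₃ τ) ρ
  simp only [d1, cup] at e₁₂ e₂₃
  simp only [d2, Pi.add_apply, cup, h₁ σ τ, h₃ τ ρ]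
  linear_combination χ₃ ρ * e₁₂ - χ₁ σ * e₂₃

theorem not_masseyEssential_zero_left (χ₂ χ₃ : G → ZMod p) :
    ¬ MasseyEssential (0 : G → ZMod p) χ₂ χ₃ := by
  rintro ⟨⟨-, z, ⟨-, φ₂₃, -, h₂₃, -⟩, -⟩, h₀⟩
  exact h₀ (MasseyRep.mem_masseySet ⟨0, φ₂₃, by simp, h₂₃, by simp⟩)

theorem not_masseyEssential_zero_middle (χ₁ χ₃ : G → ZMod p) :
    ¬ MasseyEssential χ₁ (0 : G → ZMod p) χ₃ :=
  fun ⟨_, h₀⟩ => h₀ (MasseyRep.mem_masseySet ⟨0, 0, by simp, by simp, by simp⟩)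

theorem MasseyRep.sub_cup {χ₁ χ₂ χ₃ lam : G → ZMod p} {z : G → G → ZMod p}
    (hlam : IsChar p lam) (h : MasseyRep χ₁ χ₂ χ₃ z) : MasseyRep χ₁ χ₂ χ₃ (z - cup χ₁ lam) := by
  obtain ⟨φ₁₂, φ₂₃, h₁₂, h₂₃, rfl⟩ := h
  refine ⟨φ₁₂, φ₂₃ - lam, h₁₂, ?_, ?_⟩
  · funext σ τ
    have e₂₃ := congrFun (congrFun h₂₃ σ) τ
    simp only [d1, cup, Pi.sub_apply] at e₂₃ ⊢
    linear_combination e₂₃ + hlam σ τ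
  · funext σ τ
    simp only [cup, Pi.add_apply, Pi.sub_apply]
    ring

theorem res2_charKer_eq_zero_of_masseyRep {χ₁ χ₂ : G → ZMod p} {z : G → G → ZMod p}
    (h₁ : IsChar p χ₁) (e : ZMod p) (h : MasseyRep χ₁ χ₂ (e • χ₁) z) :
    res2 (charKer χ₁ h₁) z = 0 := by
  obtain ⟨φ₁₂, φ₂₃, -, -, rfl⟩ := h
  funext u v
  simp [res2, cup, (mem_charKer_iff h₁).mp u.2, (mem_charKer_iff h₁).mp v.2]

theorem not_masseyEssential_smul_right {χ₁ : G → ZMod p} (h₁ : IsChar p χ₁)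
    (hex : ExactAtH2 p χ₁ h₁) (χ₂ : G → ZMod p) (e : ZMod p) :
    ¬ MasseyEssential χ₁ χ₂ (e • χ₁) := by
  rintro ⟨⟨-, z, hz, -⟩, h₀⟩
  have hres : IsCoboundary2 (res2 (charKer χ₁ h₁) z) :=
    ⟨0, by rw [res2_charKer_eq_zero_of_masseyRep h₁ e hz, d1_zero]⟩
  obtain ⟨lam, hlam, ψ, hψ⟩ := (hex z (hz.isCocycle2 h₁ (h₁.smul e))).mp hres
  refine h₀ ⟨z - cup χ₁ lam, hz.sub_cup hlam, -ψ, ?_⟩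
  rw [zero_sub, hψ]
  funext σ τ
  simp only [d1, Pi.neg_apply]
  ring

/-- Induced by the anti-automorphism `g ↦ g⁻¹`; on characters it sends `χ ∪ χ'` to
`-(χ' ∪ χ)`. -/
def reverse2 (f : G → G → ZMod p) : G → G → ZMod p := fun σ τ => -f τ⁻¹ σ⁻¹

@[simp]
theorem reverse2_zero : reverse2 (0 : G → G → ZMod p) = 0 := by
  funext σ τ
  simp [reverse2]

theorem Cohomologous.reverse2 {f g : G → G → ZMod p} (h : Cohomologous f g) :
    Cohomologous (reverse2 f) (reverse2 g) := by
  obtain ⟨ψ, hψ⟩ := h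
  refine ⟨fun g => -ψ g⁻¹, ?_⟩
  funext σ τ
  have e := congrFun (congrFun hψ τ⁻¹) σ⁻¹
  simp only [MasseyGalois.reverse2, Pi.sub_apply, d1] at e ⊢
  rw [mul_inv_rev]
  linear_combination -e

theorem MasseyRep.reverse2 {χ₁ χ₂ χ₃ : G → ZMod p} {z : G → G → ZMod p}
    (h₁ : IsChar p χ₁) (h₂ : IsChar p χ₂) (h₃ : IsChar p χ₃) (h : MasseyRep χ₁ χ₂ χ₃ z) :
    MasseyRep χ₃ χ₂ χ₁ (reverse2 z) := by
  obtain ⟨φ₁₂, φ₂₃, h₁₂, h₂₃, rfl⟩ := h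
  refine ⟨fun g => φ₂₃ g⁻¹, fun g => φ₁₂ g⁻¹, ?_, ?_, ?_⟩ <;> funext σ τ
  · have e := congrFun (congrFun h₂₃ τ⁻¹) σ⁻¹
    simp only [d1, cup, h₂.inv, h₃.inv] at e ⊢
    rw [mul_inv_rev]
    linear_combination e
  · have e := congrFun (congrFun h₁₂ τ⁻¹) σ⁻¹
    simp only [d1, cup, h₁.inv, h₂.inv] at e ⊢
    rw [mul_inv_rev]
    linear_combination e
  · simp only [MasseyGalois.reverse2, Pi.add_apply, cup, h₁.inv, h₃.inv]
    ring

theorem reverse2_mem_masseySet {χ₁ χ₂ χ₃ : G → ZMod p} {z : G → G → ZMod p}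
    (h₁ : IsChar p χ₁) (h₂ : IsChar p χ₂) (h₃ : IsChar p χ₃) (hz : z ∈ MasseySet χ₁ χ₂ χ₃) :
    reverse2 z ∈ MasseySet χ₃ χ₂ χ₁ :=
  let ⟨z', hrep, hcoh⟩ := hz
  ⟨reverse2 z', hrep.reverse2 h₁ h₂ h₃, hcoh.reverse2⟩

theorem MasseyEssential.reverse {χ₁ χ₂ χ₃ : G → ZMod p}
    (h₁ : IsChar p χ₁) (h₂ : IsChar p χ₂) (h₃ : IsChar p χ₃) (h : MasseyEssential χ₁ χ₂ χ₃) :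
    MasseyEssential χ₃ χ₂ χ₁ := by
  obtain ⟨⟨z, hz⟩, h₀⟩ := h
  refine ⟨⟨reverse2 z, reverse2_mem_masseySet h₁ h₂ h₃ hz⟩, fun hz₀ => h₀ ?_⟩
  simpa using reverse2_mem_masseySet h₃ h₂ h₁ hz₀

end MasseyGalois

open MasseyGalois in
/-- Proposition: under exactness at `H²(G)` of
`H¹(G) →(χ∪) H²(G) →(Res) H²(ker χ)` for every `χ ∈ H¹(G)`, all triple
Massey products are non-essential iff those with `(χ₁,χ₃)` and `(χ₂,χ₃)`
linearly independent are non-essential. -/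
theorem massey_not_essential_reduction {p : ℕ} (hp : p.Prime) {G : Type}
    [Group G]
    (hex : ∀ (χ : G → ZMod p) (hχ : IsChar p χ), ExactAtH2 p χ hχ) :
    ((∀ χ₁ χ₂ χ₃ : G → ZMod p, IsChar p χ₁ → IsChar p χ₂ → IsChar p χ₃ →
        ¬ MasseyEssential χ₁ χ₂ χ₃) ↔
      (∀ χ₁ χ₂ χ₃ : G → ZMod p, IsChar p χ₁ → IsChar p χ₂ → IsChar p χ₃ →
        LinIndepPair χ₁ χ₃ → LinIndepPair χ₂ χ₃ →
        ¬ MasseyEssential χ₁ χ₂ χ₃)) := by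
  have : Fact p.Prime := ⟨hp⟩
  refine ⟨fun H χ₁ χ₂ χ₃ h₁ h₂ h₃ _ _ => H χ₁ χ₂ χ₃ h₁ h₂ h₃, fun H χ₁ χ₂ χ₃ h₁ h₂ h₃ => ?_⟩
  by_cases h₁₃ : LinIndepPair χ₁ χ₃
  swap
  · obtain rfl | ⟨e, rfl⟩ := eq_zero_or_exists_eq_smul_of_not_linIndepPair h₁₃
    · exact not_masseyEssential_zero_left χ₂ χ₃
    · exact not_masseyEssential_smul_right h₁ (hex χ₁ h₁) χ₂ e
  by_cases h₂₃ : LinIndepPair χ₂ χ₃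
  · exact H χ₁ χ₂ χ₃ h₁ h₂ h₃ h₁₃ h₂₃
  obtain rfl | ⟨e, rfl⟩ := eq_zero_or_exists_eq_smul_of_not_linIndepPair h₂₃
  · exact not_masseyEssential_zero_middle χ₁ _
  · exact fun hess => H _ _ _ h₃ h₂ h₁ h₁₃.symm h₁₃.symm.of_smul_left
      (hess.reverse h₁ h₂ h₃)
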